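/- arXiv:2602.01356 — 2 statements merged into one kernel-verified Lean document; each statement's English description precedes it below -/
import Mathlib

section
/- (Chain accumulation bound) Let Δ > 0, let n ≥ 1, and let jobs 1, …, n form a sequential chain: processing times p_j ≥ 0 and start times S_j ≥ 0 with S_{j+1} ≥ S_j + p_j for all 1 ≤ j < n. Define bucket-aligned start times recursively by S'_1 = Δ·⌈S_1/Δ⌉ and S'_{j+1} = max(Δ·⌈S_{j+1}/Δ⌉, S'_j + p_j). Then S'_j ≤ S_j + j·Δ for every j, and consequently the completion time of the last job satisfies S'_n + p_n ≤ S_n + p_n + n·Δ. -/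
lemma ceil_mul_le (Δ x : ℝ) (hΔ : 0 < Δ) : Δ * ⌈x / Δ⌉ ≤ x + Δ := by
  have h : (⌈x / Δ⌉ : ℝ) < x / Δ + 1 := Int.ceil_lt_add_one _
  have := mul_lt_mul_of_pos_left h hΔ
  calc Δ * ⌈x / Δ⌉ ≤ Δ * (x / Δ + 1) := le_of_lt this
    _ = x + Δ := by field_simp

/-- (Chain accumulation bound) For a sequential chain of `n` jobs
(`S_{j+1} ≥ S_j + p_j`) and bucket-aligned start times defined recursively by
`S'_1 = Δ·⌈S_1/Δ⌉` and `S'_{j+1} = max(Δ·⌈S_{j+1}/Δ⌉, S'_j + p_j)`, we have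
`S'_j ≤ S_j + j·Δ` for every `1 ≤ j ≤ n`, and hence
`S'_n + p_n ≤ S_n + p_n + n·Δ`. -/
theorem chain_accumulation_bound (Δ : ℝ) (hΔ : 0 < Δ) (n : ℕ) (hn : 1 ≤ n)
    (p S : ℕ → ℝ)
    (hp : ∀ j, 1 ≤ j → j ≤ n → 0 ≤ p j)
    (hS : ∀ j, 1 ≤ j → j ≤ n → 0 ≤ S j)
    (hchain : ∀ j, 1 ≤ j → j < n → S j + p j ≤ S (j + 1))
    (S' : ℕ → ℝ)
    (hbase : S' 1 = Δ * ⌈S 1 / Δ⌉)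
    (hstep : ∀ j, 1 ≤ j → j < n →
      S' (j + 1) = max (Δ * ⌈S (j + 1) / Δ⌉) (S' j + p j)) :
    (∀ j, 1 ≤ j → j ≤ n → S' j ≤ S j + (j : ℝ) * Δ) ∧
    S' n + p n ≤ S n + p n + (n : ℝ) * Δ := by
  have main : ∀ j, 1 ≤ j → j ≤ n → S' j ≤ S j + (j : ℝ) * Δ := by
    intro j
    induction j with
    | zero => intro h; omega
    | succ k ih =>
      intro _ hjn
      rcases Nat.eq_zero_or_pos k with rfl | hk
      · rw [hbase]
        have := ceil_mul_le Δ (S 1) hΔ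
        simpa using this
      · have hkn : k < n := by omega
        rw [hstep k hk hkn]
        apply max_le
        · have := ceil_mul_le Δ (S (k + 1)) hΔ
          have : Δ * ⌈S (k+1) / Δ⌉ ≤ S (k+1) + Δ := this
          have hΔle : Δ ≤ (k+1 : ℝ) * Δ := by
            have : (1:ℝ) ≤ (k:ℝ) := by exact_mod_cast hk
            nlinarith
          push_cast
          linarith
        · have h1 := ih hk (le_of_lt hkn)
          have h2 := hchain k hk hkn
          have hΔ' : (k : ℝ) * Δ ≤ (k+1 : ℝ) * Δ := by nlinarith
          push_cast
          linarith
  exact ⟨main, by have := main n hn le_rfl; linarith⟩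
end

section
/- (Greedy approximation ratio) Let m ≥ 1 machines and n ≥ 1 jobs with processing times p_j ≥ 0 and all release dates zero, and let C* denote the minimal makespan over all feasible schedules on m identical machines. Then the greedy list-scheduling makespan satisfies C_greedy ≤ (2 − 1/m)·C*. -/
/-- (Greedy approximation ratio) Greedy list scheduling on `m ≥ 1` identical machines
(loads start at `0`, each job `j` goes to a machine `σ j` of minimal current load,
increasing that load by `p j`) produces a makespan `C_greedy = max_k A_n(k)` that is
at most `(2 − 1/m)` times the makespan of any feasible schedule (assignment `a`,
start times `S_j ≥ 0`, jobs on the same machine occupying pairwise disjoint intervals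
`[S_j, S_j + p_j)`); hence `C_greedy ≤ (2 − 1/m)·C*` for the optimal makespan `C*`. -/
theorem greedy_approximation_ratio (m n : ℕ) (hm : 1 ≤ m) (hn : 1 ≤ n)
    (p : Fin n → ℝ) (hp : ∀ j, 0 ≤ p j)
    (A : ℕ → Fin m → ℝ) (σ : Fin n → Fin m)
    (hA0 : ∀ k, A 0 k = 0)
    (hmin : ∀ j : Fin n, ∀ k : Fin m, A (j : ℕ) (σ j) ≤ A (j : ℕ) k)
    (hstep : ∀ j : Fin n,
      A ((j : ℕ) + 1) = Function.update (A (j : ℕ)) (σ j) (A (j : ℕ) (σ j) + p j))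
    (a : Fin n → Fin m) (S : Fin n → ℝ) (hS : ∀ j, 0 ≤ S j)
    (hdisj : ∀ i j : Fin n, i ≠ j → a i = a j →
      Disjoint (Set.Ico (S i) (S i + p i)) (Set.Ico (S j) (S j + p j))) :
    Finset.univ.sup' ⟨⟨0, hm⟩, Finset.mem_univ _⟩ (A n) ≤
      (2 - 1 / (m : ℝ)) *
        Finset.univ.sup' ⟨⟨0, hn⟩, Finset.mem_univ _⟩ (fun j => S j + p j) := by
  classical
  set C := Finset.univ.sup' ⟨⟨0, hn⟩, Finset.mem_univ _⟩ (fun j => S j + p j) with hCdef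
  have hCub : ∀ j : Fin n, S j + p j ≤ C := fun j => Finset.le_sup' (fun j => S j + p j) (Finset.mem_univ j)
  have hC0 : 0 ≤ C := by
    have h1 := hCub ⟨0, hn⟩
    have h2 := hS ⟨0, hn⟩
    have h3 := hp ⟨0, hn⟩
    linarith
  have hpC : ∀ j, p j ≤ C := fun j => by have := hCub j; have := hS j; linarith
  have hm' : (0:ℝ) < (m:ℝ) := by exact_mod_cast hm
  -- per-machine load of the feasible schedule is at most C
  have hmachine : ∀ k : Fin m,
      ∑ j ∈ Finset.univ.filter (fun j => a j = k), p j ≤ C := by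
    intro k
    set F := Finset.univ.filter (fun j => a j = k) with hF
    have hpd : (F : Set (Fin n)).PairwiseDisjoint
        (fun j => Set.Ico (S j) (S j + p j)) := by
      intro i hi j hj hij
      simp only [hF, Finset.coe_filter, Set.mem_setOf_eq] at hi hj
      exact hdisj i j hij (hi.2.trans hj.2.symm)
    have hvol : ∑ j ∈ F, MeasureTheory.volume (Set.Ico (S j) (S j + p j))
        = MeasureTheory.volume (⋃ j ∈ F, Set.Ico (S j) (S j + p j)) :=
      (MeasureTheory.measure_biUnion_finset hpd (fun j _ => measurableSet_Ico)).symm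
    have hsub : (⋃ j ∈ F, Set.Ico (S j) (S j + p j)) ⊆ Set.Ico 0 C := by
      intro x hx
      simp only [Set.mem_iUnion] at hx
      obtain ⟨j, _, hx1, hx2⟩ := hx
      exact ⟨le_trans (hS j) hx1, lt_of_lt_of_le hx2 (hCub j)⟩
    have h1 : ENNReal.ofReal (∑ j ∈ F, p j) ≤ ENNReal.ofReal C := by
      rw [ENNReal.ofReal_sum_of_nonneg (fun j _ => hp j)]
      calc ∑ j ∈ F, ENNReal.ofReal (p j)
          = ∑ j ∈ F, MeasureTheory.volume (Set.Ico (S j) (S j + p j)) := by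
            apply Finset.sum_congr rfl
            intro j _
            rw [Real.volume_Ico]
            congr 1
            ring
        _ = MeasureTheory.volume (⋃ j ∈ F, Set.Ico (S j) (S j + p j)) := hvol
        _ ≤ MeasureTheory.volume (Set.Ico 0 C) := MeasureTheory.measure_mono hsub
        _ = ENNReal.ofReal C := by rw [Real.volume_Ico, sub_zero]
    exact (ENNReal.ofReal_le_ofReal_iff hC0).mp h1
  -- total work is at most m * C
  have hsumtotal : ∑ j, p j ≤ (m:ℝ) * C := by
    have hfib : ∑ k : Fin m, ∑ j ∈ Finset.univ.filter (fun j => a j = k), p j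
        = ∑ j, p j := Finset.sum_fiberwise Finset.univ a p
    calc ∑ j, p j = ∑ k : Fin m, ∑ j ∈ Finset.univ.filter (fun j => a j = k), p j :=
          hfib.symm
      _ ≤ ∑ _k : Fin m, C := Finset.sum_le_sum fun k _ => hmachine k
      _ = (m:ℝ) * C := by
          simp [Finset.sum_const, nsmul_eq_mul]
  -- A is constant on machine k where no job is scheduled
  have hsame : ∀ k : Fin m, ∀ s t : ℕ, s ≤ t → t ≤ n →
      (∀ i : Fin n, s ≤ (i:ℕ) → (i:ℕ) < t → σ i ≠ k) → A t k = A s k := by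
    intro k s t
    induction t with
    | zero =>
      intro hst _ _
      have : s = 0 := Nat.le_zero.mp hst
      rw [this]
    | succ t ih =>
      intro hst htn hno
      rcases eq_or_lt_of_le hst with h | h
      · rw [h]
      · have hst' : s ≤ t := Nat.lt_succ_iff.mp h
        have ht : t < n := htn
        set j : Fin n := ⟨t, ht⟩ with hj
        have hσ : σ j ≠ k := hno j hst' (Nat.lt_succ_self t)
        have h1 : A (t+1) k = A t k := by
          have := hstep j
          simp only [hj] at this
          rw [this, Function.update_of_ne (fun hkk => hσ hkk.symm)]
        rw [h1, ih hst' (le_of_lt htn) (fun i h1 h2 => hno i h1 (Nat.lt_succ_of_lt h2))]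
  -- sum of loads equals processed work
  have hsumA : ∀ t : ℕ, t ≤ n →
      ∑ k, A t k = ∑ i ∈ Finset.univ.filter (fun i : Fin n => (i:ℕ) < t), p i := by
    intro t
    induction t with
    | zero => intro _; simp [hA0]
    | succ t ih =>
      intro ht
      have ht' : t < n := ht
      set j : Fin n := ⟨t, ht'⟩ with hj
      have hstepj := hstep j
      simp only [hj] at hstepj
      have hL : ∑ k, A (t+1) k = ∑ k, A t k + p j := by
        rw [hstepj, Finset.sum_update_of_mem (Finset.mem_univ (σ j))]
        have herase : Finset.univ \ {σ j} = Finset.univ.erase (σ j) := by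
          rw [Finset.sdiff_singleton_eq_erase]
        rw [herase]
        have := Finset.sum_erase_add Finset.univ (A t) (Finset.mem_univ (σ j))
        linarith
      have hR : ∑ i ∈ Finset.univ.filter (fun i : Fin n => (i:ℕ) < t + 1), p i
          = ∑ i ∈ Finset.univ.filter (fun i : Fin n => (i:ℕ) < t), p i + p j := by
        have hins : Finset.univ.filter (fun i : Fin n => (i:ℕ) < t + 1)
            = insert j (Finset.univ.filter (fun i : Fin n => (i:ℕ) < t)) := by
          ext i
          simp only [Finset.mem_filter, Finset.mem_insert, Finset.mem_univ, true_and]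
          constructor
          · intro hi
            rcases Nat.lt_succ_iff_lt_or_eq.mp hi with h | h
            · exact Or.inr h
            · exact Or.inl (Fin.ext h)
          · rintro (h | h)
            · rw [h]; exact Nat.lt_succ_self t
            · exact Nat.lt_succ_of_lt h
        rw [hins, Finset.sum_insert (by simp [hj])]
        ring
      rw [hL, hR, ih (le_of_lt ht)]
  -- partial work bound
  have hpartial : ∀ j : Fin n,
      ∑ i ∈ Finset.univ.filter (fun i : Fin n => (i:ℕ) < (j:ℕ)), p i
        ≤ (∑ i, p i) - p j := by
    intro j
    have h1 : ∑ i ∈ Finset.univ.filter (fun i : Fin n => (i:ℕ) < (j:ℕ)), p i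
        ≤ ∑ i ∈ Finset.univ.erase j, p i := by
      apply Finset.sum_le_sum_of_subset_of_nonneg
      · intro i hi
        simp only [Finset.mem_filter, Finset.mem_univ, true_and] at hi
        simp only [Finset.mem_erase, Finset.mem_univ, and_true]
        intro hij
        rw [hij] at hi
        exact lt_irrefl _ hi
      · intro i _ _; exact hp i
    have h2 : ∑ i ∈ Finset.univ.erase j, p i = (∑ i, p i) - p j :=
      Finset.sum_erase_eq_sub (Finset.mem_univ j)
    linarith
  -- main argument
  apply Finset.sup'_le
  intro k _
  by_cases hT : (Finset.univ.filter (fun j : Fin n => σ j = k)).Nonempty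
  · set T := Finset.univ.filter (fun j : Fin n => σ j = k) with hTdef
    set j := T.max' hT with hjdef
    have hjT : j ∈ T := T.max'_mem hT
    have hjk : σ j = k := by
      have := hjT; simp only [hTdef, Finset.mem_filter] at this; exact this.2
    have hmax : ∀ i : Fin n, σ i = k → i ≤ j := fun i hi =>
      T.le_max' i (by simp [hTdef, hi])
    have hend : A n k = A ((j:ℕ)+1) k := by
      apply hsame k ((j:ℕ)+1) n (j.isLt) le_rfl
      intro i h1 _ hik
      have := hmax i hik
      have : (i:ℕ) ≤ (j:ℕ) := this
      omega
    have hval : A ((j:ℕ)+1) k = A (j:ℕ) (σ j) + p j := by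
      rw [hstep j, ← hjk, Function.update_self]
    have havg : (m:ℝ) * A (j:ℕ) (σ j) ≤ ∑ k', A (j:ℕ) k' := by
      calc (m:ℝ) * A (j:ℕ) (σ j) = ∑ _k' : Fin m, A (j:ℕ) (σ j) := by
            simp [Finset.sum_const, nsmul_eq_mul]
        _ ≤ ∑ k', A (j:ℕ) k' := Finset.sum_le_sum fun k' _ => hmin j k'
    have hsum_j : ∑ k', A (j:ℕ) k'
        = ∑ i ∈ Finset.univ.filter (fun i : Fin n => (i:ℕ) < (j:ℕ)), p i :=
      hsumA (j:ℕ) (le_of_lt j.isLt)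
    have hkey : (m:ℝ) * A (j:ℕ) (σ j) ≤ (m:ℝ) * C - p j := by
      have := hpartial j
      have := hsumtotal
      linarith [havg, hsum_j ▸ havg]
    have hfin : A n k = A (j:ℕ) (σ j) + p j := by rw [hend, hval]
    rw [hfin]
    have hmm : (1/(m:ℝ)) * (m:ℝ) = 1 := by field_simp
    have hple : ((m:ℝ) - 1) * p j ≤ ((m:ℝ) - 1) * C :=
      mul_le_mul_of_nonneg_left (hpC j)
        (by
          have h1m : (1:ℝ) ≤ (m:ℝ) := by exact_mod_cast hm
          linarith)
    nlinarith [hkey, hple, hC0, hp j, mul_pos hm' hm']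
  · have hAnk : A n k = 0 := by
      rw [hsame k 0 n (Nat.zero_le n) le_rfl
        (fun i _ _ hik => hT ⟨i, by simp [hik]⟩), hA0]
    rw [hAnk]
    have h1 : 1/(m:ℝ) ≤ 1 := by
      rw [div_le_one hm']; exact_mod_cast hm
    nlinarith
end
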